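/- Let X have a Lebesgue density π_X on R^d with support equal to R^d and let f : R^d → R be continuously differentiable with E[f(X)²] < ∞ and E[‖∇f(X)‖²] < ∞. Then c(X) ‖E[∇f(X)]‖² ≤ Var(f(X)), where c(X) = λ_max(E[∇log π_X(X) ∇log π_X(X)^T])^{-1} is the inverse of the largest eigenvalue of the Fisher information matrix, assuming the Fisher information matrix is finite and the integration-by-parts identity E[∇h(X)] = −E[h(X) ∇log π_X(X)] holds for h(x) = f(x) − E[f(X)]. -/

import Mathlib

/-!
Put `h = f - E f`, `s = ∇ log π_X` and `u = E[∇f]`. Integration by parts says `E[h sᵢ] = -uᵢ`,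
so `E[h ⟨u, s⟩] = -‖u‖²`, and Cauchy–Schwarz gives
`‖u‖⁴ ≤ Var f(X) · E[⟨u, s⟩²] = Var f(X) · uᵀ I u ≤ Var f(X) · λ_max ‖u‖²`,
`I` being the Fisher information matrix.
-/

noncomputable section
open MeasureTheory Matrix

def sqn {n : ℕ} (v : Fin n → ℝ) : ℝ := ∑ i, (v i)^2

theorem Matrix.IsHermitian.dotProduct_mulVec_le {n : Type*} [Fintype n] {A : Matrix n n ℝ}
    (hA : A.IsHermitian) {lam : ℝ}
    (hlam : lam ∈ upperBounds {t : ℝ | ∃ v : n → ℝ, v ≠ 0 ∧ A *ᵥ v = t • v}) (u : n → ℝ) :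
    u ⬝ᵥ A *ᵥ u ≤ lam * (u ⬝ᵥ u) := by
  classical
  have hpsd : (lam • (1 : Matrix n n ℝ) - A).PosSemidef := by
    refine posSemidef_iff_isHermitian_and_spectrum_nonneg.mpr
      ⟨(isHermitian_one.smul (IsSelfAdjoint.all lam)).sub hA, ?_⟩
    rw [← Algebra.algebraMap_eq_smul_one, ← spectrum.singleton_sub_eq]
    rintro _ ⟨_, rfl, t, ht, rfl⟩
    rw [← Matrix.spectrum_toLin', ← Module.End.hasEigenvalue_iff_mem_spectrum] at ht
    obtain ⟨v, hv⟩ := ht.exists_hasEigenvector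
    simpa using hlam ⟨v, hv.2, by simpa using Module.End.mem_eigenspace_iff.mp hv.1⟩
  simpa [sub_mulVec, smul_mulVec] using hpsd.dotProduct_mulVec_nonneg u

section
variable {α : Type*} [MeasurableSpace α] {μ : Measure α}

theorem sq_integral_mul_le_integral_sq_mul_integral_sq {h g : α → ℝ}
    (hh : Integrable (fun x => h x ^ 2) μ) (hg : Integrable (fun x => g x ^ 2) μ) :
    (∫ x, h x * g x ∂μ) ^ 2 ≤ (∫ x, h x ^ 2 ∂μ) * ∫ x, g x ^ 2 ∂μ := by
  by_cases hhg : Integrable (fun x => h x * g x) μ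
  swap
  · rw [integral_undef hhg, sq, zero_mul]
    exact mul_nonneg (integral_nonneg fun _ => sq_nonneg _) (integral_nonneg fun _ => sq_nonneg _)
  have hquad : ∀ t : ℝ, 0 ≤ (∫ x, g x ^ 2 ∂μ) * (t * t) + 2 * (∫ x, h x * g x ∂μ) * t
      + ∫ x, h x ^ 2 ∂μ := by
    intro t
    have hexpand : ∫ x, (t * g x + h x) ^ 2 ∂μ = (∫ x, g x ^ 2 ∂μ) * (t * t)
        + 2 * (∫ x, h x * g x ∂μ) * t + ∫ x, h x ^ 2 ∂μ := by
      have hpoly : (fun x => (t * g x + h x) ^ 2)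
          = fun x => (t * t) * g x ^ 2 + (2 * t) * (h x * g x) + h x ^ 2 := by
        funext x; ring
      have hlin : Integrable (fun x => t * t * g x ^ 2 + 2 * t * (h x * g x)) μ :=
        (hg.const_mul _).add (hhg.const_mul _)
      rw [hpoly, integral_add hlin hh,
        integral_add (hg.const_mul _) (hhg.const_mul _), integral_const_mul, integral_const_mul]
      ring
    rw [← hexpand]
    exact integral_nonneg fun _ => sq_nonneg _
  have := discrim_le_zero hquad
  rw [discrim] at this
  nlinarith

theorem integrable_sq_sub_integral [IsFiniteMeasure μ] {f : α → ℝ}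
    (hf : Integrable (fun x => f x ^ 2) μ) :
    Integrable (fun x => (f x - ∫ y, f y ∂μ) ^ 2) μ := by
  by_cases hf1 : Integrable f μ
  · have := (hf.sub (hf1.const_mul (2 * ∫ y, f y ∂μ))).add (integrable_const ((∫ y, f y ∂μ) ^ 2))
    refine this.congr (ae_of_all _ fun x => ?_)
    simp only [Pi.add_apply, Pi.sub_apply]
    ring
  · simpa [integral_undef hf1] using hf

variable {ι : Type*}

def secondMomentMatrix (μ : Measure α) (s : α → ι → ℝ) : Matrix ι ι ℝ :=
  of fun i j => ∫ x, s x i * s x j ∂μ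

theorem isHermitian_secondMomentMatrix (μ : Measure α) (s : α → ι → ℝ) :
    (secondMomentMatrix μ s).IsHermitian := by
  ext i j
  simp only [conjTranspose_apply, secondMomentMatrix, of_apply, star_trivial, mul_comm]

variable [Fintype ι]

theorem sq_dotProduct_eq_sum (u v : ι → ℝ) :
    (u ⬝ᵥ v) ^ 2 = ∑ i, ∑ j, u i * u j * (v i * v j) := by
  rw [sq, dotProduct, Finset.sum_mul_sum]
  exact Finset.sum_congr rfl fun i _ => Finset.sum_congr rfl fun j _ => by ring

theorem integrable_sq_dotProduct {s : α → ι → ℝ}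
    (hs : ∀ i j, Integrable (fun x => s x i * s x j) μ) (u : ι → ℝ) :
    Integrable (fun x => (u ⬝ᵥ s x) ^ 2) μ := by
  simp_rw [sq_dotProduct_eq_sum]
  exact integrable_finsetSum _ fun i _ => integrable_finsetSum _ fun j _ => (hs i j).const_mul _

theorem integral_sq_dotProduct {s : α → ι → ℝ}
    (hs : ∀ i j, Integrable (fun x => s x i * s x j) μ) (u : ι → ℝ) :
    ∫ x, (u ⬝ᵥ s x) ^ 2 ∂μ = u ⬝ᵥ secondMomentMatrix μ s *ᵥ u := by
  simp_rw [sq_dotProduct_eq_sum]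
  rw [integral_finsetSum _ fun i _ => integrable_finsetSum _ fun j _ => (hs i j).const_mul _]
  simp only [dotProduct, mulVec, secondMomentMatrix, of_apply, Finset.mul_sum]
  refine Finset.sum_congr rfl fun i _ => ?_
  rw [integral_finsetSum _ fun j _ => (hs i j).const_mul _]
  refine Finset.sum_congr rfl fun j _ => ?_
  rw [integral_const_mul]
  ring

theorem integral_mul_dotProduct_of_eq_neg {h : α → ℝ} {s : α → ι → ℝ} {u : ι → ℝ}
    (hu : ∀ i, u i = -∫ x, h x * s x i ∂μ) :
    ∫ x, h x * (u ⬝ᵥ s x) ∂μ = -(u ⬝ᵥ u) := by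
  -- No measurability is needed: if `h * s i` is not integrable, its integral is `0` and `hu`
  -- forces `u i = 0`.
  have hterm : ∀ i, Integrable (fun x => u i * (h x * s x i)) μ := by
    intro i
    by_cases hi : Integrable (fun x => h x * s x i) μ
    · exact hi.const_mul _
    · have hui : u i = 0 := by rw [hu i, integral_undef hi, neg_zero]
      simp [hui]
  have hint : ∀ i, ∫ x, h x * s x i ∂μ = -u i := fun i => by linarith [hu i]
  calc ∫ x, h x * (u ⬝ᵥ s x) ∂μ = ∫ x, ∑ i, u i * (h x * s x i) ∂μ := by
        congr 1 with x
        simp only [dotProduct, Finset.mul_sum]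
        exact Finset.sum_congr rfl fun i _ => by ring
    _ = -(u ⬝ᵥ u) := by
        rw [integral_finsetSum _ fun i _ => hterm i]
        simp [integral_const_mul, hint, dotProduct]

theorem sq_dotProduct_self_le_integral_sq_mul {h : α → ℝ} {s : α → ι → ℝ} {u : ι → ℝ}
    (hh : Integrable (fun x => h x ^ 2) μ) (hs : ∀ i j, Integrable (fun x => s x i * s x j) μ)
    (hu : ∀ i, u i = -∫ x, h x * s x i ∂μ) :
    (u ⬝ᵥ u) ^ 2 ≤ (∫ x, h x ^ 2 ∂μ) * (u ⬝ᵥ secondMomentMatrix μ s *ᵥ u) :=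
  calc (u ⬝ᵥ u) ^ 2 = (∫ x, h x * (u ⬝ᵥ s x) ∂μ) ^ 2 := by
        rw [integral_mul_dotProduct_of_eq_neg hu, neg_sq]
    _ ≤ (∫ x, h x ^ 2 ∂μ) * ∫ x, (u ⬝ᵥ s x) ^ 2 ∂μ :=
        sq_integral_mul_le_integral_sq_mul_integral_sq hh (integrable_sq_dotProduct hs u)
    _ = (∫ x, h x ^ 2 ∂μ) * (u ⬝ᵥ secondMomentMatrix μ s *ᵥ u) := by
        rw [integral_sq_dotProduct hs u]

end

theorem inv_mul_le_of_sq_le_mul_of_le_mul {S V Q lam : ℝ} (hS : 0 ≤ S) (hV : 0 ≤ V)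
    (hSQ : S ^ 2 ≤ V * Q) (hQ : Q ≤ lam * S) : lam⁻¹ * S ≤ V := by
  rcases le_or_gt lam 0 with hlam | hlam
  · exact (mul_nonpos_of_nonpos_of_nonneg (inv_nonpos.mpr hlam) hS).trans hV
  rw [inv_mul_le_iff₀ hlam]
  rcases hS.eq_or_lt with rfl | hS
  · positivity
  nlinarith [mul_le_mul_of_nonneg_left hQ hV]

theorem sqn_eq_dotProduct {n : ℕ} (v : Fin n → ℝ) : sqn v = v ⬝ᵥ v := by
  simp only [sqn, dotProduct, sq]

theorem cramer_rao_like_inequality_general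
    {d : ℕ}
    (ν : Measure (Fin d → ℝ))
    (hprob : IsProbabilityMeasure ν)
    -- f continuously differentiable with gradient gradf
    (f : (Fin d → ℝ) → ℝ) (gradf : (Fin d → ℝ) → (Fin d → ℝ))
    (hfL2 : Integrable (fun x => (f x)^2) ν)
    -- the score function ∇ log π_X
    (score : (Fin d → ℝ) → (Fin d → ℝ))
    -- finite Fisher information matrix
    (hFisherInt : ∀ i j, Integrable (fun x => score x i * score x j) ν)
    (Fisher : Matrix (Fin d) (Fin d) ℝ)
    (hFisher : Fisher = Matrix.of fun i j => ∫ x, score x i * score x j ∂ν)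
    -- λ_max is the largest eigenvalue of the Fisher information matrix
    (lamMax : ℝ)
    (hlamMax : IsGreatest {t : ℝ | ∃ v : Fin d → ℝ, v ≠ 0 ∧ Fisher.mulVec v = t • v} lamMax)
    -- integration by parts identity for h = f − E[f]
    (hIBP : ∀ i, ∫ x, gradf x i ∂ν
      = -∫ x, (f x - ∫ x', f x' ∂ν) * score x i ∂ν) :
    lamMax⁻¹ * sqn (fun i => ∫ x, gradf x i ∂ν)
      ≤ ∫ x, (f x - ∫ x', f x' ∂ν)^2 ∂ν := by
  subst hFisher
  have hCR :=
    sq_dotProduct_self_le_integral_sq_mul (integrable_sq_sub_integral hfL2) hFisherInt hIBP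
  have hspec := (isHermitian_secondMomentMatrix ν score).dotProduct_mulVec_le hlamMax.2
    (fun i => ∫ x, gradf x i ∂ν)
  rw [sqn_eq_dotProduct]
  exact inv_mul_le_of_sq_le_mul_of_le_mul (dotProduct_self_star_nonneg _)
    (integral_nonneg fun _ => sq_nonneg _) hCR hspec

/-- Cramér–Rao-like inequality: `c(X) ‖E[∇f(X)]‖² ≤ Var(f(X))` with
`c(X) = λ_max(Fisher)⁻¹`, under finiteness of the Fisher information matrix and the
integration-by-parts identity `E[∇h(X)] = −E[h(X) ∇log π_X(X)]` for `h = f − E f`. -/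
theorem cramer_rao_like_inequality
    {d : ℕ} (pdf : (Fin d → ℝ) → ℝ) (hpdf_pos : ∀ x, 0 < pdf x) (hpdf_meas : Measurable pdf)
    (ν : Measure (Fin d → ℝ))
    (hν : ν = MeasureTheory.volume.withDensity (fun x => ENNReal.ofReal (pdf x)))
    (hprob : IsProbabilityMeasure ν)
    -- f continuously differentiable with gradient gradf
    (f : (Fin d → ℝ) → ℝ) (gradf : (Fin d → ℝ) → (Fin d → ℝ))
    (hf : ∀ x i, HasDerivAt (fun t : ℝ => f (x + t • (Pi.single i (1:ℝ) : Fin d → ℝ))) (gradf x i) 0)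
    (hgrad_cont : Continuous gradf)
    (hfL2 : Integrable (fun x => (f x)^2) ν)
    (hgradL2 : Integrable (fun x => sqn (gradf x)) ν)
    -- the score function ∇ log π_X
    (score : (Fin d → ℝ) → (Fin d → ℝ))
    (hscore : ∀ x i, HasDerivAt (fun t : ℝ => Real.log (pdf (x + t • (Pi.single i (1:ℝ) : Fin d → ℝ))))
      (score x i) 0)
    -- finite Fisher information matrix
    (hFisherInt : ∀ i j, Integrable (fun x => score x i * score x j) ν)
    (Fisher : Matrix (Fin d) (Fin d) ℝ)
    (hFisher : Fisher = Matrix.of fun i j => ∫ x, score x i * score x j ∂ν)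
    -- λ_max is the largest eigenvalue of the Fisher information matrix
    (lamMax : ℝ)
    (hlamMax : IsGreatest {t : ℝ | ∃ v : Fin d → ℝ, v ≠ 0 ∧ Fisher.mulVec v = t • v} lamMax)
    -- integration by parts identity for h = f − E[f]
    (hIBP : ∀ i, ∫ x, gradf x i ∂ν
      = -∫ x, (f x - ∫ x', f x' ∂ν) * score x i ∂ν) :
    lamMax⁻¹ * sqn (fun i => ∫ x, gradf x i ∂ν)
      ≤ ∫ x, (f x - ∫ x', f x' ∂ν)^2 ∂ν :=
  cramer_rao_like_inequality_general ν hprob f gradf hfL2 score hFisherInt Fisher hFisher lamMax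
    hlamMax hIBP
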